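/- arXiv:2005.11125 — 5 statements merged into one kernel-verified Lean document; each statement's English description precedes it below -/
import Mathlib

section
/- Let R be a commutative integral domain with fraction field K. Suppose X, Y, Z are matrices over R and g ∈ K is such that I = g·X + Y·Z in K^{n×n}. Then there exist matrices X̃, Z̃ over R such that X̃ is invertible over K (det X̃ ≠ 0) and I = g·X̃ + Y·Z̃. -/
/-!
Write `g = a / b` with `a, b ∈ R`. For every `t ∈ R`, the pair `X + t b Y Z`, `(1 - t a) Z` is
again a solution, because `g b = a`. Over `K`, `det (X + s b Y Z)` is a polynomial in `s` which at
`s = 1 / a` equals `det (g⁻¹ • 1) ≠ 0`. If `R` is infinite, a nonzero polynomial over `R` does not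
vanish everywhere on `R`; if `R` is finite, it is a field and `1 / a` already lies in `R`.
-/

open Matrix Polynomial

section MapMatrix

variable {R K : Type*} [CommRing R] [CommRing K] {m n : Type*}

theorem RingHom.map_matrix_smul (φ : R →+* K) (r : R) (M : Matrix m n R) :
    (r • M).map φ = φ r • M.map φ :=
  Matrix.map_smulₛₗ φ φ r (map_mul φ r) M

theorem RingHom.map_matrix_add (φ : R →+* K) (M N : Matrix m n R) :
    (M + N).map φ = M.map φ + N.map φ :=
  Matrix.map_add φ (map_add φ) M N

end MapMatrix

section DetAddSmul

variable {R : Type*} [CommRing R] {n : Type*} [Fintype n] [DecidableEq n]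

theorem RingHom.map_det_add_smul {K : Type*} [CommRing K] (φ : R →+* K) (A M : Matrix n n R)
    (t : R) : φ (A + t • M).det = (A.map φ + φ t • M.map φ).det := by
  rw [RingHom.map_det, RingHom.mapMatrix_apply, φ.map_matrix_add, φ.map_matrix_smul]

theorem Matrix.exists_det_add_smul_ne_zero_of_infinite [IsDomain R] [Infinite R] {K : Type*}
    [CommRing K] (φ : R →+* K) (A M : Matrix n n R) (s : K)
    (hs : (A.map φ + s • M.map φ).det ≠ 0) : ∃ t : R, (A + t • M).det ≠ 0 := by
  set P : R[X] := (A.map C + (X : R[X]) • M.map C).det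
  have hP : P ≠ 0 := by
    intro hP
    apply hs
    have := congrArg (eval₂RingHom φ s) hP
    rw [RingHom.map_det, map_zero] at this
    convert this using 2
    ext i j
    simp only [add_apply, map_apply, smul_apply, smul_eq_mul, RingHom.mapMatrix_apply,
      coe_eval₂RingHom, eval₂_add, eval₂_C, eval₂_mul, eval₂_X]
  by_contra! h
  refine hP (Polynomial.funext fun t => ?_)
  rw [eval_zero, ← coe_evalRingHom, RingHom.map_det, ← h t]
  congr 1
  ext i j
  simp only [add_apply, map_apply, smul_apply, smul_eq_mul, RingHom.mapMatrix_apply,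
    coe_evalRingHom, eval_add, eval_C, eval_mul, eval_X]

theorem Matrix.exists_det_add_smul_ne_zero [IsDomain R] {K : Type*} [Field K] [Algebra R K]
    [IsFractionRing R K] (A M : Matrix n n R) (s : K)
    (hs : (A.map (algebraMap R K) + s • M.map (algebraMap R K)).det ≠ 0) :
    ∃ t : R, (A + t • M).det ≠ 0 := by
  cases finite_or_infinite R
  · obtain ⟨t, rfl⟩ := IsFractionRing.surjective_iff_isField.mpr (Finite.isField_of_domain R) s
    refine ⟨t, fun h => hs ?_⟩
    rw [← RingHom.map_det_add_smul, h, map_zero]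
  · exact exists_det_add_smul_ne_zero_of_infinite _ A M s hs

end DetAddSmul

section Solutions

variable {R : Type*} [CommRing R] {n p : Type*} [DecidableEq n] [Fintype p]

theorem one_eq_smul_add_mul_shift {K : Type*} [CommRing K] (φ : R →+* K) {X : Matrix n n R}
    {Y : Matrix n p R} {Z : Matrix p n R} {g : K} (h : 1 = g • X.map φ + Y.map φ * Z.map φ)
    {a b : R} (hg : g * φ b = φ a) (t : R) :
    1 = g • (X + t • b • (Y * Z)).map φ + Y.map φ * ((1 - t * a) • Z).map φ := by
  rw [φ.map_matrix_add, φ.map_matrix_smul, φ.map_matrix_smul, φ.map_matrix_smul, Matrix.map_mul,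
    Matrix.mul_smul, map_sub, map_one, map_mul, ← hg, h]
  module

theorem add_inv_smul_eq_of_one_eq_div_smul_add_mul {K : Type*} [Field K] (φ : R →+* K)
    {X : Matrix n n R} {Y : Matrix n p R} {Z : Matrix p n R} {a b : R}
    (h : 1 = (φ a / φ b) • X.map φ + Y.map φ * Z.map φ) (ha : φ a ≠ 0) (hb : φ b ≠ 0) :
    X.map φ + (φ a)⁻¹ • (b • (Y * Z)).map φ = (φ b / φ a) • 1 := by
  rw [φ.map_matrix_smul, Matrix.map_mul, eq_sub_of_add_eq' h.symm, smul_smul, smul_sub, smul_smul]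
  field_simp
  module

end Solutions

theorem stmt3 (R : Type*) [CommRing R] [IsDomain R] (n p : ℕ)
    (X : Matrix (Fin n) (Fin n) R) (Y : Matrix (Fin n) (Fin p) R) (Z : Matrix (Fin p) (Fin n) R)
    (g : FractionRing R)
    (h : (1 : Matrix (Fin n) (Fin n) (FractionRing R)) =
      g • X.map (algebraMap R (FractionRing R)) +
        Y.map (algebraMap R (FractionRing R)) * Z.map (algebraMap R (FractionRing R))) :
    ∃ (X' : Matrix (Fin n) (Fin n) R) (Z' : Matrix (Fin p) (Fin n) R),
      (X'.map (algebraMap R (FractionRing R))).det ≠ 0 ∧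
      (1 : Matrix (Fin n) (Fin n) (FractionRing R)) =
        g • X'.map (algebraMap R (FractionRing R)) +
          Y.map (algebraMap R (FractionRing R)) * Z'.map (algebraMap R (FractionRing R)) := by
  by_cases hg : g = 0
  · exact ⟨1, Z, by simp, by simpa [hg] using h⟩
  obtain ⟨a, b, hb, rfl⟩ := IsFractionRing.div_surjective (A := R) g
  have hb' : algebraMap R (FractionRing R) b ≠ 0 :=
    IsFractionRing.to_map_ne_zero_of_mem_nonZeroDivisors hb
  have ha' : algebraMap R (FractionRing R) a ≠ 0 := fun ha => hg (by rw [ha, zero_div])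
  obtain ⟨t, ht⟩ := exists_det_add_smul_ne_zero X (b • (Y * Z)) (algebraMap R _ a)⁻¹ (by
    rw [add_inv_smul_eq_of_one_eq_div_smul_add_mul _ h ha' hb', det_smul, det_one, mul_one]
    exact pow_ne_zero _ (div_ne_zero hb' ha'))
  refine ⟨X + t • b • (Y * Z), (1 - t * a) • Z, ?_,
    one_eq_smul_add_mul_shift _ h (div_mul_cancel₀ _ hb') t⟩
  rwa [← RingHom.mapMatrix_apply, ← RingHom.map_det, ne_eq,
    map_eq_zero_iff _ (IsFractionRing.injective R _)]
end

section
/- In the ring H^∞ of bounded holomorphic functions on the right half-plane ℂ₊, the fractional ideal generated by 1/(e^{-s}-1) and 1/s + 1/(s²+π²) equals the principal fractional ideal generated by (s+1)²/((e^{-s}-1)(s²+π²)). -/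
/-- The open right half-plane. -/
def RHP : Set ℂ := {s : ℂ | 0 < s.re}

/-- `H^∞`: functions holomorphic and bounded on the open right half-plane. -/
def Hinf : Set (ℂ → ℂ) :=
  {f : ℂ → ℂ | DifferentiableOn ℂ f RHP ∧ ∃ M : ℝ, ∀ s ∈ RHP, ‖f s‖ ≤ M}

/-!
Write `E = e^{-s} - 1`, `S = s² + π²` and `g = (s + 1)² / (E S)`. Both generators are
`H^∞`-multiples of `g`: `1/E = (S/(s+1)²) g` and `1/s + 1/S = (E/s) ((s² + s + π²)/(s+1)²) g`.
Conversely `g = α/E + β (1/s + 1/S)` with `β = q/(s+1)` and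
`α = (s+3)/(s+1) - β ((e^{-s} + 1)/S + E/s)`, where `q = ((π² - 3) s + 3π² - 1)/2` is
chosen so that `(s + 1)³ + 2q = (s + 3) S`. This Bézout identity is purely algebraic in
`e^{-s}`; the exponential matters only for boundedness: `e^{-s} + 1` vanishes at the zeros
`±iπ` of `S`, so `(e^{-s} + 1)/S ∈ H^∞`.
-/

open Complex Polynomial
open scoped Real

theorem span_pair_eq_span_singleton_of_bezout {T K : Type*} [CommSemiring K]
    (R : Subsemiring (T → K)) (D : Set T) {g₁ g₂ g u v α β : T → K}
    (hu : u ∈ R) (hv : v ∈ R) (hα : α ∈ R) (hβ : β ∈ R)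
    (hg₁ : ∀ x ∈ D, g₁ x = u x * g x) (hg₂ : ∀ x ∈ D, g₂ x = v x * g x)
    (hg : ∀ x ∈ D, g x = α x * g₁ x + β x * g₂ x) :
    {h : T → K | ∃ a ∈ R, ∃ b ∈ R, ∀ x ∈ D, h x = a x * g₁ x + b x * g₂ x} =
      {h : T → K | ∃ c ∈ R, ∀ x ∈ D, h x = c x * g x} := by
  ext h
  constructor
  · rintro ⟨a, ha, b, hb, hab⟩
    refine ⟨a * u + b * v, add_mem (mul_mem ha hu) (mul_mem hb hv), fun x hx => ?_⟩
    rw [hab x hx, hg₁ x hx, hg₂ x hx, Pi.add_apply, Pi.mul_apply, Pi.mul_apply]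
    ring
  · rintro ⟨c, hc, hcg⟩
    refine ⟨c * α, mul_mem hc hα, c * β, mul_mem hc hβ, fun x hx => ?_⟩
    rw [hcg x hx, hg x hx, Pi.mul_apply, Pi.mul_apply]
    ring

def Hinf.subring : Subring (ℂ → ℂ) where
  carrier := Hinf
  mul_mem' := by
    rintro f g ⟨hf, M, hM⟩ ⟨hg, N, hN⟩
    refine ⟨hf.mul hg, M * N, fun s hs => ?_⟩
    rw [Pi.mul_apply, norm_mul]
    exact mul_le_mul (hM s hs) (hN s hs) (norm_nonneg _) ((norm_nonneg _).trans (hM s hs))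
  one_mem' := ⟨differentiableOn_const 1, 1, fun _ _ => by simp⟩
  add_mem' := by
    rintro f g ⟨hf, M, hM⟩ ⟨hg, N, hN⟩
    exact ⟨hf.add hg, M + N, fun s hs =>
      (norm_add_le _ _).trans (add_le_add (hM s hs) (hN s hs))⟩
  zero_mem' := ⟨differentiableOn_const 0, 0, fun _ _ => by simp⟩
  neg_mem' := by
    rintro f ⟨hf, M, hM⟩
    exact ⟨hf.neg, M, fun s hs => by simpa using hM s hs⟩

namespace RHP

variable {s : ℂ}

lemma ne_zero (hs : s ∈ RHP) : s ≠ 0 := by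
  rintro rfl
  exact lt_irrefl (0 : ℝ) hs

lemma one_le_norm_add_one (hs : s ∈ RHP) : 1 ≤ ‖s + 1‖ := by
  have : (0 : ℝ) < s.re := hs
  calc (1 : ℝ) ≤ (s + 1).re := by simp only [add_re, one_re]; linarith
    _ ≤ ‖s + 1‖ := re_le_norm _

lemma add_one_ne_zero (hs : s ∈ RHP) : s + 1 ≠ 0 :=
  norm_pos_iff.mp (one_pos.trans_le (one_le_norm_add_one hs))

lemma norm_le_norm_add_one (hs : s ∈ RHP) : ‖s‖ ≤ ‖s + 1‖ := by
  have : (0 : ℝ) < s.re := hs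
  rw [norm_def, norm_def]
  gcongr
  simp only [normSq_apply, add_re, add_im, one_re, one_im]
  nlinarith

lemma sq_add_sq_ne_zero (hs : s ∈ RHP) (c : ℝ) : s ^ 2 + (c : ℂ) ^ 2 ≠ 0 := by
  have hsc : s ^ 2 + (c : ℂ) ^ 2 = (s - c * I) * (s + c * I) := by ring_nf; rw [I_sq]; ring
  have hre : 0 < s.re := hs
  rw [hsc]
  exact mul_ne_zero (ne_zero (s := s - c * I) (by simpa [RHP] using hre))
    (ne_zero (s := s + c * I) (by simpa [RHP] using hre))

lemma exp_neg_sub_one_ne_zero (hs : s ∈ RHP) : cexp (-s) - 1 ≠ 0 := by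
  have : (0 : ℝ) < s.re := hs
  rw [sub_ne_zero]
  intro h
  have := congrArg norm h
  rw [norm_exp, norm_one, neg_re, Real.exp_eq_one_iff] at this
  linarith

end RHP

lemma Complex.norm_exp_sub_one_le_two {w : ℂ} (hw : w.re ≤ 0) : ‖cexp w - 1‖ ≤ 2 := by
  have : ‖cexp w‖ ≤ 1 := by rw [norm_exp]; exact Real.exp_le_one_iff.mpr hw
  calc ‖cexp w - 1‖ ≤ ‖cexp w‖ + ‖(1 : ℂ)‖ := norm_sub_le _ _
    _ ≤ 2 := by rw [norm_one]; linarith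

lemma Complex.norm_exp_sub_one_le_two_mul_norm {w : ℂ} (hw : w.re ≤ 0) :
    ‖cexp w - 1‖ ≤ 2 * ‖w‖ := by
  rcases le_or_gt ‖w‖ 1 with h | h
  · exact norm_exp_sub_one_le h
  · linarith [norm_exp_sub_one_le_two hw]

lemma Polynomial.eval_div_add_one_pow_mem_Hinf (p : ℂ[X]) {n : ℕ} (hp : p.natDegree ≤ n) :
    (fun s => p.eval s / (s + 1) ^ n) ∈ Hinf := by
  refine ⟨p.differentiable.differentiableOn.div (by fun_prop)
    fun s hs => pow_ne_zero _ (RHP.add_one_ne_zero hs),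
    ∑ i ∈ Finset.range (n + 1), ‖p.coeff i‖, fun s hs => ?_⟩
  have h1 := RHP.one_le_norm_add_one hs
  rw [norm_div, norm_pow, div_le_iff₀ (by positivity),
    p.eval_eq_sum_range' (Nat.lt_succ_of_le hp), Finset.sum_mul]
  refine (norm_sum_le _ _).trans (Finset.sum_le_sum fun i hi => ?_)
  rw [norm_mul, norm_pow]
  gcongr
  calc ‖s‖ ^ i ≤ ‖s + 1‖ ^ i := by gcongr; exact RHP.norm_le_norm_add_one hs
    _ ≤ ‖s + 1‖ ^ n := pow_le_pow_right₀ h1 (Nat.lt_succ_iff.mp (Finset.mem_range.mp hi))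

lemma exp_neg_sub_one_div_mem_Hinf : (fun s => (cexp (-s) - 1) / s) ∈ Hinf := by
  refine ⟨DifferentiableOn.div (by fun_prop) (by fun_prop) fun s hs => RHP.ne_zero hs, 2,
    fun s hs => ?_⟩
  have hre : (-s).re ≤ 0 := by simpa using (le_of_lt (hs : (0 : ℝ) < s.re))
  rw [norm_div, div_le_iff₀ (norm_pos_iff.mpr (RHP.ne_zero hs))]
  simpa using norm_exp_sub_one_le_two_mul_norm hre

lemma exp_neg_add_one_div_mem_Hinf :
    (fun s => (cexp (-s) + 1) / (s ^ 2 + (π : ℂ) ^ 2)) ∈ Hinf := by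
  refine ⟨DifferentiableOn.div (by fun_prop) (by fun_prop)
    fun s hs => RHP.sq_add_sq_ne_zero hs π, 2, fun s hs => ?_⟩
  have hre : 0 < s.re := hs
  have hm : ‖cexp (-s) + 1‖ ≤ 2 * ‖s - π * I‖ := by
    have : cexp (-s) + 1 = -(cexp (-(s - π * I)) - 1) := by
      rw [show -(s - π * I) = -s + π * I by ring, exp_add, exp_pi_mul_I]; ring
    rw [this, norm_neg, ← norm_neg (s - π * I)]
    exact norm_exp_sub_one_le_two_mul_norm (by simpa using hre.le)
  have hp : ‖cexp (-s) + 1‖ ≤ 2 * ‖s + π * I‖ := by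
    have : cexp (-s) + 1 = -(cexp (-(s + π * I)) - 1) := by
      rw [show -(s + π * I) = -s + -(π * I) by ring, exp_add, exp_neg (π * I), exp_pi_mul_I]
      ring
    rw [this, norm_neg, ← norm_neg (s + π * I)]
    exact norm_exp_sub_one_le_two_mul_norm (by simpa using hre.le)
  have hsep : 2 ≤ ‖s - π * I‖ + ‖s + π * I‖ := by
    calc (2 : ℝ) ≤ 2 * π := by linarith [Real.pi_gt_three]
      _ = ‖(s + π * I) - (s - π * I)‖ := by
          rw [show (s + π * I) - (s - π * I) = ((2 * π : ℝ) : ℂ) * I by push_cast; ring,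
            norm_mul, norm_I, mul_one, norm_real, Real.norm_of_nonneg (by positivity)]
      _ ≤ ‖s - π * I‖ + ‖s + π * I‖ := (norm_sub_le _ _).trans_eq (add_comm _ _)
  have hfac : s ^ 2 + (π : ℂ) ^ 2 = (s - π * I) * (s + π * I) := by ring_nf; rw [I_sq]; ring
  rw [norm_div, div_le_iff₀ (norm_pos_iff.mpr (RHP.sq_add_sq_ne_zero hs π)), hfac, norm_mul]
  -- one of the two distances to `±iπ` is at least `1`
  rcases le_total ‖s - π * I‖ 1 with h | h <;>
    nlinarith [norm_nonneg (s - π * I), norm_nonneg (s + π * I)]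

section BezoutIdentities

variable {s e c : ℂ}

lemma one_div_sub_one_eq_mul (hs₁ : s + 1 ≠ 0) (hS : s ^ 2 + c ^ 2 ≠ 0) :
    1 / (e - 1) =
      (s ^ 2 + c ^ 2) / (s + 1) ^ 2 * ((s + 1) ^ 2 / ((e - 1) * (s ^ 2 + c ^ 2))) := by
  rcases eq_or_ne (e - 1) 0 with he | he
  · simp [he]
  field_simp

lemma one_div_add_one_div_eq_mul (hs : s ≠ 0) (hs₁ : s + 1 ≠ 0) (hS : s ^ 2 + c ^ 2 ≠ 0)
    (he : e - 1 ≠ 0) :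
    1 / s + 1 / (s ^ 2 + c ^ 2) = (e - 1) / s * ((s ^ 2 + s + c ^ 2) / (s + 1) ^ 2) *
      ((s + 1) ^ 2 / ((e - 1) * (s ^ 2 + c ^ 2))) := by
  field_simp
  ring

lemma div_eq_bezout_combination (hs : s ≠ 0) (hs₁ : s + 1 ≠ 0) (hS : s ^ 2 + c ^ 2 ≠ 0)
    (he : e - 1 ≠ 0) :
    (s + 1) ^ 2 / ((e - 1) * (s ^ 2 + c ^ 2)) =
      ((s + 3) / (s + 1) - ((c ^ 2 - 3) / 2 * s + (3 * c ^ 2 - 1) / 2) / (s + 1) *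
          ((e + 1) / (s ^ 2 + c ^ 2) + (e - 1) / s)) * (1 / (e - 1)) +
        ((c ^ 2 - 3) / 2 * s + (3 * c ^ 2 - 1) / 2) / (s + 1) *
          (1 / s + 1 / (s ^ 2 + c ^ 2)) := by
  field_simp
  ring

end BezoutIdentities

/-- The fractional ideal of `H^∞` generated by `1/(e^{-s}-1)` and `1/s + 1/(s²+π²)`
coincides with the principal fractional ideal generated by
`(s+1)²/((e^{-s}-1)(s²+π²))`. -/
theorem stmt5 :
    {h : ℂ → ℂ | ∃ a ∈ Hinf, ∃ b ∈ Hinf, ∀ s ∈ RHP,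
        h s = a s * (1 / (Complex.exp (-s) - 1)) +
          b s * (1 / s + 1 / (s ^ 2 + (Real.pi : ℂ) ^ 2))} =
    {h : ℂ → ℂ | ∃ c ∈ Hinf, ∀ s ∈ RHP,
        h s = c s * ((s + 1) ^ 2 /
          ((Complex.exp (-s) - 1) * (s ^ 2 + (Real.pi : ℂ) ^ 2)))} := by
  have hu : (fun s => (s ^ 2 + (π : ℂ) ^ 2) / (s + 1) ^ 2) ∈ Hinf := by
    convert (X ^ 2 + C ((π : ℂ) ^ 2)).eval_div_add_one_pow_mem_Hinf (by compute_degree!)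
      using 2
    simp
  have hw : (fun s => (s ^ 2 + s + (π : ℂ) ^ 2) / (s + 1) ^ 2) ∈ Hinf := by
    convert (X ^ 2 + X + C ((π : ℂ) ^ 2)).eval_div_add_one_pow_mem_Hinf (by compute_degree!)
      using 2
    simp
  have hβ : (fun s => (((π : ℂ) ^ 2 - 3) / 2 * s + (3 * (π : ℂ) ^ 2 - 1) / 2) / (s + 1))
      ∈ Hinf := by
    convert Polynomial.eval_div_add_one_pow_mem_Hinf
      (C (((π : ℂ) ^ 2 - 3) / 2) * X + C ((3 * (π : ℂ) ^ 2 - 1) / 2)) (n := 1)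
      (by compute_degree!) using 2
    simp
  have hr : (fun s => (s + 3) / (s + 1)) ∈ Hinf := by
    convert (X + C (3 : ℂ)).eval_div_add_one_pow_mem_Hinf (n := 1) (by compute_degree!) using 2
    simp
  refine span_pair_eq_span_singleton_of_bezout Hinf.subring.toSubsemiring RHP hu
    (Hinf.subring.mul_mem exp_neg_sub_one_div_mem_Hinf hw)
    (Hinf.subring.sub_mem hr (Hinf.subring.mul_mem hβ
      (Hinf.subring.add_mem exp_neg_add_one_div_mem_Hinf exp_neg_sub_one_div_mem_Hinf))) hβ
    (fun s hs => ?_) (fun s hs => ?_) (fun s hs => ?_)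
  all_goals
    have h₀ := RHP.ne_zero hs
    have h₁ := RHP.add_one_ne_zero hs
    have hS := RHP.sq_add_sq_ne_zero hs π
    have hE := RHP.exp_neg_sub_one_ne_zero hs
  · exact one_div_sub_one_eq_mul h₁ hS
  · exact one_div_add_one_div_eq_mul h₀ h₁ hS hE
  · exact div_eq_bezout_combination h₀ h₁ hS hE
end

section
/- Let R be a commutative integral domain with fraction field K, P ∈ K^{n×m}, C ∈ K^{m×n} a stabilizing controller (i.e. the four matrices (I-PC)⁻¹, (I-PC)⁻¹P, C(I-PC)⁻¹, (I-CP)⁻¹ all have entries in R). Let G = (g_{ij}) ∈ K^{n×q}. If for all i, j there exist matrices A_{ij}, B_{ij} over R with g_{ij}·I = A_{ij} + B_{ij}C (as n×n matrices over K), then g_{ij}·[-(I-PC)⁻¹P, (I-PC)⁻¹] has all entries in R for every i, j. -/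
/-!
Multiplying `g • 1 = A + B * C` on the right by `M` gives `g • M = A * M + B * (C * M)`, so
`g • M` is stable as soon as `M` and `C * M` are. For `M = (1 - P * C)⁻¹` this is the
stability of `C * (1 - P * C)⁻¹`; for `M = (1 - P * C)⁻¹ * P` it follows from
`(1 - C * P)⁻¹ = 1 + C * (1 - P * C)⁻¹ * P`.
-/

open Matrix

/-- A matrix over the fraction field is *stable* if all its entries lie in `R`. -/
def MatStable (R : Type*) [CommRing R] [IsDomain R] {α β : Type*}
    (M : Matrix α β (FractionRing R)) : Prop :=
  ∀ i j, ∃ r : R, algebraMap R (FractionRing R) r = M i j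

theorem matStable_iff_mem_range {R : Type*} [CommRing R] [IsDomain R] {α β : Type*}
    {M : Matrix α β (FractionRing R)} :
    MatStable R M ↔ ∀ i j, M i j ∈ (algebraMap R (FractionRing R)).range :=
  Iff.rfl

namespace MatStable

variable {R : Type*} [CommRing R] [IsDomain R] {α β γ : Type*}

theorem add {M N : Matrix α β (FractionRing R)} (hM : MatStable R M) (hN : MatStable R N) :
    MatStable R (M + N) := by
  rw [matStable_iff_mem_range] at *
  exact fun i j => add_mem (hM i j) (hN i j)

theorem neg {M : Matrix α β (FractionRing R)} (hM : MatStable R M) : MatStable R (-M) := by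
  rw [matStable_iff_mem_range] at *
  exact fun i j => neg_mem (hM i j)

theorem sub {M N : Matrix α β (FractionRing R)} (hM : MatStable R M) (hN : MatStable R N) :
    MatStable R (M - N) := by
  rw [matStable_iff_mem_range] at *
  exact fun i j => sub_mem (hM i j) (hN i j)

theorem one [DecidableEq α] : MatStable R (1 : Matrix α α (FractionRing R)) := by
  rw [matStable_iff_mem_range]
  intro i j
  rcases eq_or_ne i j with rfl | hij
  · simp
  · simp [one_apply_ne hij]

theorem mul [Fintype β] {M : Matrix α β (FractionRing R)} {N : Matrix β γ (FractionRing R)}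
    (hM : MatStable R M) (hN : MatStable R N) : MatStable R (M * N) := by
  rw [matStable_iff_mem_range] at *
  exact fun i j => Subring.sum_mem _ fun k _ => mul_mem (hM i k) (hN k j)

theorem smul_of_smul_one_eq_add_mul {n m p : Type*} [Fintype n] [Fintype m] [DecidableEq n] {g : FractionRing R}
    {A : Matrix n n (FractionRing R)} {B : Matrix n m (FractionRing R)}
    {C : Matrix m n (FractionRing R)} {M : Matrix n p (FractionRing R)}
    (hg : g • (1 : Matrix n n (FractionRing R)) = A + B * C) (hA : MatStable R A)
    (hB : MatStable R B) (hM : MatStable R M) (hCM : MatStable R (C * M)) :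
    MatStable R (g • M) := by
  have hgM : g • M = A * M + B * (C * M) := by
    rw [← Matrix.mul_assoc, ← Matrix.add_mul, ← hg, smul_mul, Matrix.one_mul]
  rw [hgM]
  exact (hA.mul hM).add (hB.mul hCM)

end MatStable

theorem Matrix.inv_one_sub_mul_comm {α m n : Type*} [CommRing α] [Fintype m] [Fintype n]
    [DecidableEq m] [DecidableEq n] (P : Matrix m n α) (C : Matrix n m α)
    (h : IsUnit (1 - P * C).det) : (1 - C * P)⁻¹ = 1 + C * (1 - P * C)⁻¹ * P := by
  refine inv_eq_right_inv ?_
  calc (1 - C * P) * (1 + C * (1 - P * C)⁻¹ * P)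
      = 1 - C * P + C * ((1 - P * C) * (1 - P * C)⁻¹) * P := by
        simp only [Matrix.mul_add, Matrix.mul_sub, Matrix.sub_mul, Matrix.mul_one,
          Matrix.one_mul, Matrix.mul_assoc]
    _ = 1 := by rw [mul_nonsing_inv _ h, Matrix.mul_one, sub_add_cancel]

theorem stmt6_general (R : Type*) [CommRing R] [IsDomain R] (n m q : ℕ)
    (P : Matrix (Fin n) (Fin m) (FractionRing R)) (C : Matrix (Fin m) (Fin n) (FractionRing R))
    (G : Matrix (Fin n) (Fin q) (FractionRing R))
    (h1 : (1 - P * C).det ≠ 0)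
    (hs1 : MatStable R (1 - P * C)⁻¹) (hs2 : MatStable R ((1 - P * C)⁻¹ * P))
    (hs3 : MatStable R (C * (1 - P * C)⁻¹)) (hs4 : MatStable R (1 - C * P)⁻¹)
    (hIM : ∀ i j, ∃ (A : Matrix (Fin n) (Fin n) (FractionRing R))
        (B : Matrix (Fin n) (Fin m) (FractionRing R)),
      MatStable R A ∧ MatStable R B ∧
        G i j • (1 : Matrix (Fin n) (Fin n) (FractionRing R)) = A + B * C) :
    ∀ i j, MatStable R (G i j • (-((1 - P * C)⁻¹ * P))) ∧
      MatStable R (G i j • (1 - P * C)⁻¹) := by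
  have hCQP : MatStable R (C * ((1 - P * C)⁻¹ * P)) := by
    rw [← Matrix.mul_assoc, eq_sub_of_add_eq' (inv_one_sub_mul_comm P C h1.isUnit).symm]
    exact hs4.sub MatStable.one
  intro i j
  obtain ⟨A, B, hA, hB, hAB⟩ := hIM i j
  refine ⟨?_, hA.smul_of_smul_one_eq_add_mul hAB hB hs1 hs3⟩
  rw [smul_neg]
  exact (MatStable.smul_of_smul_one_eq_add_mul hAB hA hB hs2 hCQP).neg

theorem stmt6 (R : Type*) [CommRing R] [IsDomain R] (n m q : ℕ)
    (P : Matrix (Fin n) (Fin m) (FractionRing R)) (C : Matrix (Fin m) (Fin n) (FractionRing R))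
    (G : Matrix (Fin n) (Fin q) (FractionRing R))
    (h1 : (1 - P * C).det ≠ 0) (h2 : (1 - C * P).det ≠ 0)
    (hs1 : MatStable R (1 - P * C)⁻¹) (hs2 : MatStable R ((1 - P * C)⁻¹ * P))
    (hs3 : MatStable R (C * (1 - P * C)⁻¹)) (hs4 : MatStable R (1 - C * P)⁻¹)
    (hIM : ∀ i j, ∃ (A : Matrix (Fin n) (Fin n) (FractionRing R))
        (B : Matrix (Fin n) (Fin m) (FractionRing R)),
      MatStable R A ∧ MatStable R B ∧
        G i j • (1 : Matrix (Fin n) (Fin n) (FractionRing R)) = A + B * C) :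
    ∀ i j, MatStable R (G i j • (-((1 - P * C)⁻¹ * P))) ∧
      MatStable R (G i j • (1 - P * C)⁻¹) :=
  stmt6_general R n m q P C G h1 hs1 hs2 hs3 hs4 hIM
end

section
/- Let R be a commutative integral domain with fraction field K, and let C = N D⁻¹ be a right coprime factorization of C ∈ K^{m×n}: N ∈ R^{m×n}, D ∈ R^{n×n}, det D ≠ 0, and there exist X, Y over R with XN + YD = I. Let d ∈ R, d ≠ 0. Then the following are equivalent: (a) there exist A₀, B₀ over R with d⁻¹·I = A₀ + B₀·C; (b) there exists D₀ over R with D = d·D₀. -/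
open Matrix

theorem stmt10 (R : Type*) [CommRing R] [IsDomain R] (n m : ℕ)
    (C : Matrix (Fin m) (Fin n) (FractionRing R))
    (N : Matrix (Fin m) (Fin n) R) (D : Matrix (Fin n) (Fin n) R)
    (hD : (D.map (algebraMap R (FractionRing R))).det ≠ 0)
    (hC : C = N.map (algebraMap R (FractionRing R)) * (D.map (algebraMap R (FractionRing R)))⁻¹)
    (hcop : ∃ (X : Matrix (Fin n) (Fin m) R) (Y : Matrix (Fin n) (Fin n) R),
      X * N + Y * D = 1)
    (d : R) (hd : d ≠ 0) :
    (∃ (A₀ : Matrix (Fin n) (Fin n) R) (B₀ : Matrix (Fin n) (Fin m) R),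
        (algebraMap R (FractionRing R) d)⁻¹ • (1 : Matrix (Fin n) (Fin n) (FractionRing R)) =
          A₀.map (algebraMap R (FractionRing R)) +
            B₀.map (algebraMap R (FractionRing R)) * C) ↔
    (∃ D₀ : Matrix (Fin n) (Fin n) R, D = d • D₀) := by
  let φ := algebraMap R (FractionRing R)
  have hinj : Function.Injective φ := IsFractionRing.injective R (FractionRing R)
  have hdu : φ d ≠ 0 := fun h => hd (hinj (by simpa using h))
  have hDu : IsUnit (D.map φ).det := isUnit_iff_ne_zero.mpr hD
  have hDinv : D.map φ * (D.map φ)⁻¹ = 1 := mul_nonsing_inv _ hDu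
  have hDinv' : (D.map φ)⁻¹ * D.map φ = 1 := nonsing_inv_mul _ hDu
  have hCD : C * D.map φ = N.map φ := by
    rw [hC, Matrix.mul_assoc, hDinv', Matrix.mul_one]
  have map_smul' : ∀ (M : Matrix (Fin n) (Fin n) R), (d • M).map φ = φ d • M.map φ := by
    intro M; ext i j
    simp only [Matrix.map_apply, Matrix.smul_apply, smul_eq_mul, _root_.map_mul]
  constructor
  · rintro ⟨A₀, B₀, h⟩
    refine ⟨A₀ * D + B₀ * N, ?_⟩
    have h1 : (φ d)⁻¹ • D.map φ = A₀.map φ * D.map φ + B₀.map φ * N.map φ := by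
      calc (φ d)⁻¹ • D.map φ = ((φ d)⁻¹ • 1) * D.map φ := by rw [smul_mul_assoc, one_mul]
        _ = (A₀.map φ + B₀.map φ * C) * D.map φ := by rw [h]
        _ = _ := by rw [add_mul, Matrix.mul_assoc, hCD]
    have h2 : D.map φ = φ d • (A₀.map φ * D.map φ + B₀.map φ * N.map φ) := by
      rw [← h1, smul_smul, mul_inv_cancel₀ hdu, one_smul]
    apply Matrix.map_injective hinj
    show D.map ⇑φ = (d • (A₀ * D + B₀ * N)).map ⇑φ
    rw [map_smul', Matrix.map_add _ fun a b => _root_.map_add φ a b, Matrix.map_mul, Matrix.map_mul]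
    exact h2
  · rintro ⟨D₀, hD₀⟩
    obtain ⟨X, Y, hXY⟩ := hcop
    refine ⟨D₀ * Y, D₀ * X, ?_⟩
    have hmap : D.map φ = φ d • D₀.map φ := by rw [hD₀, map_smul']
    have key : (φ d)⁻¹ • (1 : Matrix (Fin n) (Fin n) (FractionRing R)) =
        D₀.map φ * (D.map φ)⁻¹ := by
      rw [← hDinv, hmap, smul_mul_assoc, smul_smul, inv_mul_cancel₀ hdu, one_smul]
    have hXY' : (X.map φ) * (N.map φ) + (Y.map φ) * (D.map φ) = 1 := by
      have := congrArg (fun M => M.map φ) hXY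
      simpa only [Matrix.map_add _ fun a b => _root_.map_add φ a b, Matrix.map_mul, Matrix.map_one _ φ.map_zero φ.map_one] using this
    rw [key, hC, Matrix.map_mul, Matrix.map_mul]
    calc D₀.map φ * (D.map φ)⁻¹
        = D₀.map φ * (((X.map φ) * (N.map φ) + (Y.map φ) * (D.map φ)) * (D.map φ)⁻¹) := by
          rw [hXY', one_mul]
      _ = D₀.map φ * Y.map φ + D₀.map φ * X.map φ * (N.map φ * (D.map φ)⁻¹) := by
          rw [add_mul, Matrix.mul_assoc (Y.map φ), hDinv, Matrix.mul_one, mul_add, add_comm]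
          simp [Matrix.mul_assoc]
end

section
/- Let R be a commutative integral domain with fraction field K. Let P ∈ K^{n×m} and suppose C_s ∈ K^{m×n} stabilizes P and C₀ ∈ K^{m×n} stabilizes P₀ = P(I - C_sP)⁻¹. Then (I - (C_s+C₀)P)⁻¹ C_s = (I - C_sP)⁻¹C_s + (I - C_sP)⁻¹ C₀ (I - P₀C₀)⁻¹ P₀ C_s, and in particular (I - (C_s+C₀)P)⁻¹C_s has all entries in R. -/
/-!
With `P₀ = P (1 - Cs P)⁻¹` the loop factors as `1 - (Cs + C₀) P = (1 - C₀ P₀) (1 - Cs P)`, and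
`(1 - C₀ P₀)⁻¹ = 1 + C₀ (1 - P₀ C₀)⁻¹ P₀`; expanding gives the formula. Integrality comes from the
push-through identity `(1 - Cs P)⁻¹ Cs = Cs (1 - P Cs)⁻¹`, which turns `P₀ Cs` into
`(1 - P Cs)⁻¹ - 1`, so that both terms become products of matrices known to have entries in `R`.
-/

open Matrix

section MatStable

variable {R : Type*} [CommRing R] [IsDomain R] {α β γ : Type*}

theorem matStable_iff_exists_map {M : Matrix α β (FractionRing R)} :
    MatStable R M ↔ ∃ N : Matrix α β R, N.map (algebraMap R (FractionRing R)) = M := by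
  constructor
  · intro h
    choose N hN using h
    exact ⟨N, Matrix.ext hN⟩
  · rintro ⟨N, rfl⟩ i j
    exact ⟨N i j, rfl⟩

theorem MatStable.add_s11 {M N : Matrix α β (FractionRing R)} (hM : MatStable R M)
    (hN : MatStable R N) : MatStable R (M + N) := by
  obtain ⟨M', rfl⟩ := matStable_iff_exists_map.mp hM
  obtain ⟨N', rfl⟩ := matStable_iff_exists_map.mp hN
  exact matStable_iff_exists_map.mpr ⟨M' + N', Matrix.map_add _ (map_add _) _ _⟩

theorem MatStable.sub_s11 {M N : Matrix α β (FractionRing R)} (hM : MatStable R M)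
    (hN : MatStable R N) : MatStable R (M - N) := by
  obtain ⟨M', rfl⟩ := matStable_iff_exists_map.mp hM
  obtain ⟨N', rfl⟩ := matStable_iff_exists_map.mp hN
  exact matStable_iff_exists_map.mpr ⟨M' - N', Matrix.map_sub _ (map_sub _) _ _⟩

theorem MatStable.mul_s11 [Fintype β] {M : Matrix α β (FractionRing R)}
    {N : Matrix β γ (FractionRing R)} (hM : MatStable R M) (hN : MatStable R N) :
    MatStable R (M * N) := by
  obtain ⟨M', rfl⟩ := matStable_iff_exists_map.mp hM
  obtain ⟨N', rfl⟩ := matStable_iff_exists_map.mp hN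
  exact matStable_iff_exists_map.mpr ⟨M' * N', Matrix.map_mul⟩

theorem MatStable.one_s11 [DecidableEq α] : MatStable R (1 : Matrix α α (FractionRing R)) :=
  matStable_iff_exists_map.mpr ⟨1, Matrix.map_one _ (map_zero _) (map_one _)⟩

end MatStable

namespace Matrix

variable {l m α : Type*} [Fintype l] [Fintype m] [DecidableEq m] [CommRing α]

theorem inv_one_sub_mul [DecidableEq l] {A : Matrix l m α} {B : Matrix m l α}
    (h : IsUnit (1 - B * A).det) : (1 - A * B)⁻¹ = 1 + A * (1 - B * A)⁻¹ * B := by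
  refine inv_eq_right_inv ?_
  have hcomm : (1 - A * B) * A = A * (1 - B * A) := by
    rw [Matrix.sub_mul, Matrix.mul_sub, Matrix.one_mul, Matrix.mul_one, Matrix.mul_assoc]
  rw [Matrix.mul_add, Matrix.mul_one, ← Matrix.mul_assoc, ← Matrix.mul_assoc, hcomm,
    Matrix.mul_assoc A, mul_nonsing_inv _ h, Matrix.mul_one]
  abel

theorem inv_one_sub_mul_mul_comm [DecidableEq l] {A : Matrix l m α} {B : Matrix m l α}
    (h : IsUnit (1 - B * A).det) : (1 - A * B)⁻¹ * A = A * (1 - B * A)⁻¹ := by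
  calc (1 - A * B)⁻¹ * A = A * (1 - B * A)⁻¹ * ((1 - B * A) + B * A) := by
        rw [inv_one_sub_mul h, Matrix.add_mul, Matrix.one_mul, Matrix.mul_add,
          nonsing_inv_mul_cancel_right _ _ h]
        simp only [Matrix.mul_assoc]
    _ = A * (1 - B * A)⁻¹ := by rw [sub_add_cancel, Matrix.mul_one]

theorem mul_inv_one_sub {A : Matrix m m α} (h : IsUnit (1 - A).det) :
    A * (1 - A)⁻¹ = (1 - A)⁻¹ - 1 :=
  calc A * (1 - A)⁻¹ = (1 - (1 - A)) * (1 - A)⁻¹ := by rw [sub_sub_cancel]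
    _ = (1 - A)⁻¹ - 1 := by rw [Matrix.sub_mul, Matrix.one_mul, mul_nonsing_inv _ h]

theorem one_sub_add_mul_eq_mul {P : Matrix l m α} {C D : Matrix m l α}
    (h : IsUnit (1 - D * P).det) :
    1 - (D + C) * P = (1 - C * (P * (1 - D * P)⁻¹)) * (1 - D * P) := by
  rw [Matrix.sub_mul, Matrix.one_mul, Matrix.mul_assoc C, Matrix.mul_assoc P,
    nonsing_inv_mul _ h, Matrix.mul_one, Matrix.add_mul]
  abel

end Matrix

theorem stmt11_general (R : Type*) [CommRing R] [IsDomain R] (n m : ℕ)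
    (P : Matrix (Fin n) (Fin m) (FractionRing R))
    (Cs C₀ : Matrix (Fin m) (Fin n) (FractionRing R))
    (P₀ : Matrix (Fin n) (Fin m) (FractionRing R))
    (hP₀ : P₀ = P * (1 - Cs * P)⁻¹)
    (hd1 : (1 - P * Cs).det ≠ 0) (hd2 : (1 - Cs * P).det ≠ 0)
    (hd3 : (1 - P₀ * C₀).det ≠ 0)
    (hs1 : MatStable R (1 - P * Cs)⁻¹)
    (hs3 : MatStable R (Cs * (1 - P * Cs)⁻¹)) (hs4 : MatStable R (1 - Cs * P)⁻¹)
    (ht3 : MatStable R (C₀ * (1 - P₀ * C₀)⁻¹)) :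
    (1 - (Cs + C₀) * P)⁻¹ * Cs =
        (1 - Cs * P)⁻¹ * Cs + (1 - Cs * P)⁻¹ * C₀ * (1 - P₀ * C₀)⁻¹ * P₀ * Cs ∧
      MatStable R ((1 - (Cs + C₀) * P)⁻¹ * Cs) := by
  have hpush : (1 - Cs * P)⁻¹ * Cs = Cs * (1 - P * Cs)⁻¹ :=
    inv_one_sub_mul_mul_comm (isUnit_iff_ne_zero.mpr hd1)
  have hP₀Cs : P₀ * Cs = (1 - P * Cs)⁻¹ - 1 := by
    rw [hP₀, Matrix.mul_assoc, hpush, ← Matrix.mul_assoc,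
      mul_inv_one_sub (isUnit_iff_ne_zero.mpr hd1)]
  have hformula : (1 - (Cs + C₀) * P)⁻¹ * Cs =
      (1 - Cs * P)⁻¹ * Cs + (1 - Cs * P)⁻¹ * C₀ * (1 - P₀ * C₀)⁻¹ * P₀ * Cs := by
    rw [one_sub_add_mul_eq_mul (isUnit_iff_ne_zero.mpr hd2), ← hP₀, Matrix.mul_inv_rev,
      inv_one_sub_mul (isUnit_iff_ne_zero.mpr hd3), Matrix.mul_add, Matrix.mul_one,
      Matrix.add_mul]
    simp only [Matrix.mul_assoc]
  have hregroup : (1 - Cs * P)⁻¹ * Cs + (1 - Cs * P)⁻¹ * C₀ * (1 - P₀ * C₀)⁻¹ * P₀ * Cs =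
      Cs * (1 - P * Cs)⁻¹ + (1 - Cs * P)⁻¹ * (C₀ * (1 - P₀ * C₀)⁻¹) * ((1 - P * Cs)⁻¹ - 1) := by
    rw [hpush, ← hP₀Cs]
    simp only [Matrix.mul_assoc]
  refine ⟨hformula, ?_⟩
  rw [hformula, hregroup]
  exact hs3.add_s11 ((hs4.mul_s11 ht3).mul_s11 (hs1.sub_s11 MatStable.one_s11))

theorem stmt11 (R : Type*) [CommRing R] [IsDomain R] (n m : ℕ)
    (P : Matrix (Fin n) (Fin m) (FractionRing R))
    (Cs C₀ : Matrix (Fin m) (Fin n) (FractionRing R))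
    (P₀ : Matrix (Fin n) (Fin m) (FractionRing R))
    (hP₀ : P₀ = P * (1 - Cs * P)⁻¹)
    (hd1 : (1 - P * Cs).det ≠ 0) (hd2 : (1 - Cs * P).det ≠ 0)
    (hd3 : (1 - P₀ * C₀).det ≠ 0) (hd4 : (1 - C₀ * P₀).det ≠ 0)
    (hd5 : (1 - (Cs + C₀) * P).det ≠ 0)
    (hs1 : MatStable R (1 - P * Cs)⁻¹) (hs2 : MatStable R ((1 - P * Cs)⁻¹ * P))
    (hs3 : MatStable R (Cs * (1 - P * Cs)⁻¹)) (hs4 : MatStable R (1 - Cs * P)⁻¹)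
    (ht1 : MatStable R (1 - P₀ * C₀)⁻¹) (ht2 : MatStable R ((1 - P₀ * C₀)⁻¹ * P₀))
    (ht3 : MatStable R (C₀ * (1 - P₀ * C₀)⁻¹)) (ht4 : MatStable R (1 - C₀ * P₀)⁻¹) :
    (1 - (Cs + C₀) * P)⁻¹ * Cs =
        (1 - Cs * P)⁻¹ * Cs + (1 - Cs * P)⁻¹ * C₀ * (1 - P₀ * C₀)⁻¹ * P₀ * Cs ∧
      MatStable R ((1 - (Cs + C₀) * P)⁻¹ * Cs) :=
  stmt11_general R n m P Cs C₀ P₀ hP₀ hd1 hd2 hd3 hs1 hs3 hs4 ht3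
end
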